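/- arXiv:1411.3954 — 5 statements merged into one kernel-verified Lean document; each statement's English description precedes it below -/
import Mathlib

section
/- Defensive mixture bound: if q_α = α₁ p + Σ_{j≥2} α_j q_j with α₁ > 0, then the importance sampling variance satisfies σ²_α ≤ (1/α₁)(σ²_p + (1−α₁)μ²), where σ²_p = ∫ (f(x)−μ)² p(x) dx. -/
open MeasureTheory

/-- Defensive mixture bound: if `q_α = α₁ p + ∑_{j≥2} α_j q_j` with `α₁ > 0`, then
`σ²_α ≤ (1/α₁)(σ²_p + (1−α₁) μ²)` where `σ²_p = ∫ (f − μ)² p`. -/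
theorem defensive_mixture_variance_bound
    {E : Type*} [MeasurableSpace E] (ν : Measure E) (J : ℕ) [NeZero J]
    (f p : E → ℝ) (q : Fin J → E → ℝ) (α : Fin J → ℝ) (μ : ℝ)
    (hq1p : q 0 = p)
    (hp0 : ∀ x, 0 ≤ p x) (hp1 : ∫ x, p x ∂ν = 1)
    (hq0 : ∀ j x, 0 ≤ q j x) (hq1 : ∀ j, ∫ x, q j x ∂ν = 1)
    (hα0 : ∀ j, 0 ≤ α j) (hα1 : ∑ j, α j = 1) (hα : 0 < α 0)
    (hμ : ∫ x, f x * p x ∂ν = μ)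
    (hintp : Integrable (fun x => (f x - μ) ^ 2 * p x) ν)
    (hintα : IntegrableOn
      (fun x => (f x * p x - μ * ∑ j, α j * q j x) ^ 2 / (∑ j, α j * q j x))
      {x | 0 < ∑ j, α j * q j x} ν) :
    (∫ x in {x | 0 < ∑ j, α j * q j x},
        (f x * p x - μ * ∑ j, α j * q j x) ^ 2 / (∑ j, α j * q j x) ∂ν)
      ≤ (1 / α 0) * ((∫ x, (f x - μ) ^ 2 * p x ∂ν) + (1 - α 0) * μ ^ 2) := by
  set Q : E → ℝ := fun x => ∑ j, α j * q j x with hQdef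
  set S : Set E := {x | 0 < Q x} with hSdef
  have hQ0 : ∀ x, 0 ≤ Q x := fun x =>
    Finset.sum_nonneg fun j _ => mul_nonneg (hα0 j) (hq0 j x)
  have hpQ : ∀ x, α 0 * p x ≤ Q x := by
    intro x
    have h := Finset.single_le_sum (f := fun j => α j * q j x)
      (fun j _ => mul_nonneg (hα0 j) (hq0 j x)) (Finset.mem_univ 0)
    simpa [hq1p] using h
  have int_p : Integrable p ν := by
    by_contra h
    rw [integral_undef h] at hp1; norm_num at hp1
  have int_q : ∀ j, Integrable (q j) ν := by
    intro j
    by_contra h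
    have := hq1 j
    rw [integral_undef h] at this; norm_num at this
  have int_Q : Integrable Q ν := by
    apply integrable_finset_sum
    intro j _
    exact (int_q j).const_mul (α j)
  have hQ1 : ∫ x, Q x ∂ν = 1 := by
    rw [hQdef]
    rw [integral_finset_sum _ (fun j _ => (int_q j).const_mul (α j))]
    simp_rw [integral_const_mul, hq1, mul_one, hα1]
  have hpS : ∀ x, x ∉ S → p x = 0 := by
    intro x hx
    have hQx : Q x = 0 := le_antisymm (not_lt.1 hx) (hQ0 x)
    nlinarith [hpQ x, hp0 x]
  have hQS : ∀ x, x ∉ S → Q x = 0 := fun x hx => le_antisymm (not_lt.1 hx) (hQ0 x)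
  have hSnm : NullMeasurableSet S ν := by
    have hQae : AEMeasurable Q ν :=
      Finset.aemeasurable_fun_sum _ fun j _ => ((int_q j).aemeasurable.const_mul (α j))
    exact hQae.nullMeasurable measurableSet_Ioi
  have haeS : ∀ᵐ x ∂ν.restrict S, x ∈ S := ae_restrict_mem₀ hSnm
  -- key pointwise bound
  have key : ∀ x ∈ S, (f x * p x) ^ 2 / Q x ≤ (1 / α 0) * (f x ^ 2 * p x) := by
    intro x hx
    have hQx : 0 < Q x := hx
    rcases (hp0 x).eq_or_lt with hp | hp
    · rw [← hp]; simp
    · rw [div_le_iff₀ hQx]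
      have h1 : α 0 * p x ≤ Q x := hpQ x
      have h2 : f x ^ 2 * p x * (α 0 * p x) ≤ f x ^ 2 * p x * Q x := by
        apply mul_le_mul_of_nonneg_left h1
        positivity
      calc (f x * p x) ^ 2 = (1 / α 0) * (f x ^ 2 * p x * (α 0 * p x)) := by
            field_simp
        _ ≤ (1 / α 0) * (f x ^ 2 * p x * Q x) := by
            apply mul_le_mul_of_nonneg_left h2
            positivity
        _ = 1 / α 0 * (f x ^ 2 * p x) * Q x := by ring
  by_cases hμ0 : μ = 0
  · -- simple case: μ = 0
    subst hμ0
    have hφint : IntegrableOn (fun x => (1 / α 0) * ((f x - 0) ^ 2 * p x)) S ν :=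
      (hintp.const_mul _).integrableOn
    have hmono : ∫ x in S, (f x * p x - 0 * Q x) ^ 2 / Q x ∂ν
        ≤ ∫ x in S, (1 / α 0) * ((f x - 0) ^ 2 * p x) ∂ν := by
      refine integral_mono_ae hintα hφint ?_
      filter_upwards [haeS] with x hx
      have := key x hx
      simpa using this
    have h2 : ∫ x in S, (1 / α 0) * ((f x - 0) ^ 2 * p x) ∂ν
        ≤ (1 / α 0) * ∫ x, (f x - 0) ^ 2 * p x ∂ν := by
      rw [integral_const_mul]
      apply mul_le_mul_of_nonneg_left _ (by positivity)
      apply setIntegral_le_integral hintp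
      filter_upwards with x
      have := hp0 x
      positivity
    calc _ ≤ _ := hmono
      _ ≤ (1 / α 0) * ∫ x, (f x - 0) ^ 2 * p x ∂ν := h2
      _ = (1 / α 0) * ((∫ x, (f x - 0) ^ 2 * p x ∂ν) + (1 - α 0) * 0 ^ 2) := by ring
  · -- main case: f*p is integrable
    have int_fp : Integrable (fun x => f x * p x) ν := by
      by_contra h
      rw [integral_undef h] at hμ
      exact hμ0 hμ.symm
    have heq : (fun x => f x ^ 2 * p x)
        = fun x => (f x - μ) ^ 2 * p x + (2 * μ) * (f x * p x) - μ ^ 2 * p x := by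
      funext x; ring
    have int_f2p : Integrable (fun x => f x ^ 2 * p x) ν := by
      rw [heq]
      exact (hintp.add (int_fp.const_mul _)).sub (int_p.const_mul _)
    have hf2p : ∫ x, f x ^ 2 * p x ∂ν = (∫ x, (f x - μ) ^ 2 * p x ∂ν) + μ ^ 2 := by
      have intA : Integrable (fun x => (f x - μ) ^ 2 * p x + 2 * μ * (f x * p x)) ν :=
        hintp.add (int_fp.const_mul _)
      have intB : Integrable (fun x => μ ^ 2 * p x) ν := int_p.const_mul _
      have intC : Integrable (fun x => 2 * μ * (f x * p x)) ν := int_fp.const_mul _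
      rw [heq, integral_sub intA intB, integral_add hintp intC, integral_const_mul,
        integral_const_mul, hμ, hp1]
      ring
    set φ : E → ℝ := fun x =>
      (1 / α 0) * (f x ^ 2 * p x) - 2 * μ * (f x * p x) + μ ^ 2 * Q x with hφdef
    have int_φ : Integrable φ ν :=
      ((int_f2p.const_mul _).sub (int_fp.const_mul _)).add (int_Q.const_mul _)
    have hmono : ∫ x in S, (f x * p x - μ * Q x) ^ 2 / Q x ∂ν ≤ ∫ x in S, φ x ∂ν := by
      refine integral_mono_ae hintα int_φ.integrableOn ?_
      filter_upwards [haeS] with x hx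
      have hQx : (0 : ℝ) < Q x := hx
      have hexp : (f x * p x - μ * Q x) ^ 2 / Q x
          = (f x * p x) ^ 2 / Q x - 2 * μ * (f x * p x) + μ ^ 2 * Q x := by
        field_simp
        ring
      rw [hexp, hφdef]
      have := key x hx
      simp only
      linarith
    have hIfp : ∫ x in S, f x * p x ∂ν = μ := by
      rw [setIntegral_eq_integral_of_forall_compl_eq_zero
        (fun x hx => by rw [hpS x hx, mul_zero]), hμ]
    have hIQ : ∫ x in S, Q x ∂ν = 1 := by
      rw [setIntegral_eq_integral_of_forall_compl_eq_zero (fun x hx => hQS x hx), hQ1]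
    have hIf2p : ∫ x in S, f x ^ 2 * p x ∂ν ≤ (∫ x, (f x - μ) ^ 2 * p x ∂ν) + μ ^ 2 := by
      rw [← hf2p]
      apply setIntegral_le_integral int_f2p
      filter_upwards with x
      have := hp0 x
      positivity
    have hφval : ∫ x in S, φ x ∂ν
        ≤ (1 / α 0) * ((∫ x, (f x - μ) ^ 2 * p x ∂ν) + μ ^ 2) - 2 * μ * μ + μ ^ 2 := by
      rw [hφdef]
      simp only
      have intA : IntegrableOn
          (fun x => (1 / α 0) * (f x ^ 2 * p x) - 2 * μ * (f x * p x)) S ν :=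
        ((int_f2p.const_mul _).sub (int_fp.const_mul _)).integrableOn
      have intB : IntegrableOn (fun x => μ ^ 2 * Q x) S ν := (int_Q.const_mul _).integrableOn
      have intC : IntegrableOn (fun x => (1 / α 0) * (f x ^ 2 * p x)) S ν :=
        (int_f2p.const_mul _).integrableOn
      have intD : IntegrableOn (fun x => 2 * μ * (f x * p x)) S ν :=
        (int_fp.const_mul _).integrableOn
      rw [integral_add intA intB, integral_sub intC intD,
        integral_const_mul, integral_const_mul, integral_const_mul, hIfp, hIQ]
      have h1 : (1 / α 0) * ∫ x in S, f x ^ 2 * p x ∂ν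
          ≤ (1 / α 0) * ((∫ x, (f x - μ) ^ 2 * p x ∂ν) + μ ^ 2) :=
        mul_le_mul_of_nonneg_left hIf2p (by positivity)
      linarith
    have hfinal : (1 / α 0) * ((∫ x, (f x - μ) ^ 2 * p x ∂ν) + μ ^ 2) - 2 * μ * μ + μ ^ 2
        = (1 / α 0) * ((∫ x, (f x - μ) ^ 2 * p x ∂ν) + (1 - α 0) * μ ^ 2) := by
      field_simp
      ring
    linarith [hmono, hφval]
end

section
/- The multiple importance sampling estimator is unbiased: if {ω_j} is a partition of unity (Σ_j ω_j(x) = 1 wherever p(x) > 0, and ω_j(x) = 0 wherever q_j(x) = 0) then E[Σ_j (1/n_j) Σ_{i=1}^{n_j} ω_j(x_{ij}) f(x_{ij})p(x_{ij})/q_j(x_{ij})] = μ for independent x_{ij} ∼ q_j. -/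
open MeasureTheory
open scoped ENNReal NNReal

lemma mis_map_eval_pi {ι : Type*} [Fintype ι] [DecidableEq ι] {α : ι → Type*}
    [∀ i, MeasurableSpace (α i)] (μ : ∀ i, Measure (α i))
    [∀ i, IsProbabilityMeasure (μ i)] (i : ι) :
    (Measure.pi μ).map (Function.eval i) = μ i := by
  ext s hs
  rw [Measure.map_apply (measurable_pi_apply i) hs, Set.eval_preimage, Measure.pi_pi,
    Fintype.prod_eq_single i (fun j hj => by simp [Function.update_of_ne hj]),
    Function.update_self]

/-- The multiple importance sampling estimator is unbiased: if `{ω_j}` is a partition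
of unity (`∑_j ω_j x = 1` wherever `p x > 0`, and `ω_j x = 0` wherever `q_j x = 0`),
then `E[∑_j (1/n_j) ∑_i ω_j(x_{ij}) f(x_{ij}) p(x_{ij})/q_j(x_{ij})] = μ`
for independent `x_{ij} ∼ q_j`. -/
theorem multiple_importance_sampling_unbiased
    {E : Type*} [MeasurableSpace E] (ν : Measure E) (J : ℕ)
    (f p : E → ℝ) (q : Fin J → E → ℝ) (μ : ℝ)
    (hp0 : ∀ x, 0 ≤ p x) (hp1 : ∫ x, p x ∂ν = 1)
    (hq0 : ∀ j x, 0 ≤ q j x) (hq1 : ∀ j, ∫ x, q j x ∂ν = 1)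
    (hintf : Integrable (fun x => f x * p x) ν)
    (hμ : ∫ x, f x * p x ∂ν = μ)
    (nj : Fin J → ℕ) (hnj : ∀ j, 1 ≤ nj j)
    (ω : Fin J → E → ℝ)
    (hω1 : ∀ x, 0 < p x → ∑ j, ω j x = 1)
    (hω0 : ∀ j x, q j x = 0 → ω j x = 0)
    (Q : Fin J → Measure E)
    (hQ : ∀ j, Q j = ν.withDensity fun x => ENNReal.ofReal (q j x))
    (hint : ∀ j, Integrable (fun y => ω j y * (f y * p y / q j y)) (Q j)) :
    ∫ x : (j : Fin J) → Fin (nj j) → E,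
        (∑ j, (nj j : ℝ)⁻¹ *
          ∑ i, ω j (x j i) * (f (x j i) * p (x j i) / q j (x j i)))
      ∂(Measure.pi fun j => Measure.pi fun _ : Fin (nj j) => Q j) = μ := by
  -- q j is integrable
  have hqint : ∀ j, Integrable (q j) ν := by
    intro j
    by_contra h
    have := hq1 j
    rw [integral_undef h] at this
    norm_num at this
  have hqmeas : ∀ j, AEMeasurable (fun x => (q j x).toNNReal) ν :=
    fun j => (hqint j).aemeasurable.real_toNNReal
  -- pointwise: q • (ω * (f p / q)) = ω * (f p)
  have hptw : ∀ j x, q j x * (ω j x * (f x * p x / q j x)) = ω j x * (f x * p x) := by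
    intro j x
    rcases eq_or_ne (q j x) 0 with h | h
    · simp [h, hω0 j x h]
    · field_simp
  -- Q j as withDensity with NNReal density
  have hQ' : ∀ j, Q j = ν.withDensity fun x => ((q j x).toNNReal : ℝ≥0∞) := hQ
  -- Q j is a probability measure
  haveI hprob : ∀ j, IsProbabilityMeasure (Q j) := by
    intro j
    rw [hQ j]
    constructor
    rw [withDensity_apply _ MeasurableSet.univ, Measure.restrict_univ,
      ← ofReal_integral_eq_lintegral_ofReal (hqint j)
        (Filter.Eventually.of_forall (hq0 j)), hq1 j]
    simp
  -- integral over Q j equals integral of ω f p over ν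
  have key : ∀ j, ∫ y, ω j y * (f y * p y / q j y) ∂(Q j)
      = ∫ x, ω j x * (f x * p x) ∂ν := by
    intro j
    rw [hQ' j, integral_withDensity_eq_integral_smul₀ (hqmeas j)]
    refine integral_congr_ae (Filter.Eventually.of_forall fun x => ?_)
    simp only [NNReal.smul_def, Real.coe_toNNReal _ (hq0 j x), smul_eq_mul]
    exact hptw j x
  -- integrability of ω j * f p over ν
  have hintν : ∀ j, Integrable (fun x => ω j x * (f x * p x)) ν := by
    intro j
    have h := hint j
    rw [hQ' j, integrable_withDensity_iff_integrable_smul₀ (hqmeas j)] at h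
    refine h.congr (Filter.Eventually.of_forall fun x => ?_)
    simp only [NNReal.smul_def, Real.coe_toNNReal _ (hq0 j x), smul_eq_mul]
    exact hptw j x
  -- map of the big pi measure along coordinate evaluation
  set π : Measure ((j : Fin J) → Fin (nj j) → E) :=
    Measure.pi fun j => Measure.pi fun _ : Fin (nj j) => Q j with hπ
  have hmapT : ∀ (j : Fin J) (i : Fin (nj j)),
      π.map (fun x => x j i) = Q j := by
    intro j i
    have h1 : π.map (Function.eval j) = Measure.pi fun _ : Fin (nj j) => Q j :=
      mis_map_eval_pi _ j
    have h2 : π.map (fun x => x j i)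
        = (π.map (Function.eval j)).map (Function.eval i) := by
      rw [Measure.map_map (measurable_pi_apply i) (measurable_pi_apply j)]
      rfl
    rw [h2, h1, mis_map_eval_pi _ i]
  -- per-coordinate integral and integrability
  have hcoord : ∀ (j : Fin J) (i : Fin (nj j)),
      ∫ x, ω j (x j i) * (f (x j i) * p (x j i) / q j (x j i)) ∂π
        = ∫ y, ω j y * (f y * p y / q j y) ∂(Q j) := by
    intro j i
    have hT : AEMeasurable (fun x : (j : Fin J) → Fin (nj j) → E => x j i) π :=
      ((measurable_pi_apply j).eval).aemeasurable
    have hg : AEStronglyMeasurable (fun y => ω j y * (f y * p y / q j y))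
        (π.map fun x => x j i) := by
      rw [hmapT j i]; exact (hint j).aestronglyMeasurable
    rw [← hmapT j i, integral_map hT hg]
  have hcoordInt : ∀ (j : Fin J) (i : Fin (nj j)),
      Integrable (fun x => ω j (x j i) * (f (x j i) * p (x j i) / q j (x j i))) π := by
    intro j i
    have h := hint j
    rw [← hmapT j i] at h
    exact h.comp_measurable ((measurable_pi_apply j).eval)
  -- expand the integral of the finite sums
  rw [integral_finset_sum _ (fun j _ => ((integrable_finset_sum _
      (fun i _ => hcoordInt j i)).const_mul _))]
  have : ∀ j : Fin J, (∫ x, (nj j : ℝ)⁻¹ *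
      ∑ i, ω j (x j i) * (f (x j i) * p (x j i) / q j (x j i)) ∂π)
      = ∫ x, ω j x * (f x * p x) ∂ν := by
    intro j
    rw [integral_const_mul, integral_finset_sum _ (fun i _ => hcoordInt j i)]
    have : ∀ i : Fin (nj j),
        (∫ x, ω j (x j i) * (f (x j i) * p (x j i) / q j (x j i)) ∂π)
          = ∫ x, ω j x * (f x * p x) ∂ν := fun i => (hcoord j i).trans (key j)
    rw [Finset.sum_congr rfl (fun i _ => this i), Finset.sum_const, Finset.card_univ,
      Fintype.card_fin, nsmul_eq_mul, ← mul_assoc, inv_mul_cancel₀, one_mul]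
    exact Nat.cast_ne_zero.mpr (by have := hnj j; omega)
  rw [Finset.sum_congr rfl (fun j _ => this j),
    ← integral_finset_sum _ (fun j _ => hintν j), ← hμ]
  refine integral_congr_ae (Filter.Eventually.of_forall fun x => ?_)
  show ∑ j, ω j x * (f x * p x) = f x * p x
  rw [← Finset.sum_mul]
  rcases (hp0 x).lt_or_eq with h | h
  · rw [hω1 x h, one_mul]
  · simp [← h]
end

section
/- The mixture importance sampling variance σ²_α = ∫_{q_α>0} (f p)²/q_α dx − μ² is a convex function of α on the interior of the simplex. -/
open MeasureTheory

private lemma div_convex_aux {c s t a b : ℝ}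
    (ha : 0 < a) (hb : 0 < b) (hab : a + b = 1)
    (h : c ≠ 0 → 0 < s ∧ 0 < t) :
    c ^ 2 / (a * s + b * t) ≤ a * (c ^ 2 / s) + b * (c ^ 2 / t) := by
  rcases eq_or_ne c 0 with hc | hc
  · simp [hc]
  · obtain ⟨hs', ht'⟩ := h hc
    have hst : 0 < a * s + b * t := by positivity
    rw [mul_div_assoc', mul_div_assoc', div_add_div _ _ (ne_of_gt hs') (ne_of_gt ht'),
      div_le_div_iff₀ hst (by positivity)]
    have hd : 0 ≤ c ^ 2 := sq_nonneg c
    have hb' : b = 1 - a := by linarith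
    subst hb'
    nlinarith [mul_nonneg (mul_nonneg (mul_nonneg ha.le hb.le) hd) (sq_nonneg (s - t))]


/-- The mixture importance sampling variance
`σ²_α = ∫_{q_α>0} (f p)²/q_α − μ²` is a convex function of `α` on the
interior of the simplex `S⁰ = {α : ∀ j, α j > 0, ∑ α j = 1}`. -/
theorem mixture_variance_convex
    {E : Type*} [MeasurableSpace E] (ν : Measure E) (J : ℕ)
    (f p : E → ℝ) (q : Fin J → E → ℝ) (μ : ℝ)
    (hp0 : ∀ x, 0 ≤ p x) (hp1 : ∫ x, p x ∂ν = 1)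
    (hq0 : ∀ j x, 0 ≤ q j x) (hq1 : ∀ j, ∫ x, q j x ∂ν = 1)
    (hμ : ∫ x, f x * p x ∂ν = μ)
    (hsupp : ∀ (α : Fin J → ℝ), (∀ j, 0 < α j) → (∑ j, α j) = 1 →
      ∀ x, f x * p x ≠ 0 → 0 < ∑ j, α j * q j x)
    (hint : ∀ (α : Fin J → ℝ), (∀ j, 0 < α j) → (∑ j, α j) = 1 →
      IntegrableOn (fun x => (f x * p x) ^ 2 / (∑ j, α j * q j x))
        {x | 0 < ∑ j, α j * q j x} ν) :
    ConvexOn ℝ {α : Fin J → ℝ | (∀ j, 0 < α j) ∧ (∑ j, α j) = 1}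
      (fun α =>
        (∫ x in {x | 0 < ∑ j, α j * q j x},
          (f x * p x) ^ 2 / (∑ j, α j * q j x) ∂ν) - μ ^ 2) := by
  -- rewrite set integral as full integral, for α in the set
  have hrw : ∀ (α : Fin J → ℝ), (∀ j, 0 < α j) → (∑ j, α j) = 1 →
      (∫ x in {x | 0 < ∑ j, α j * q j x},
        (f x * p x) ^ 2 / (∑ j, α j * q j x) ∂ν)
      = ∫ x, (f x * p x) ^ 2 / (∑ j, α j * q j x) ∂ν := by
    intro α hα1 hα2
    apply setIntegral_eq_integral_of_forall_compl_eq_zero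
    intro x hx
    rcases eq_or_ne (f x * p x) 0 with h0 | h0
    · simp [h0]
    · exact absurd (hsupp α hα1 hα2 x h0) hx
  have hInt : ∀ (α : Fin J → ℝ), (∀ j, 0 < α j) → (∑ j, α j) = 1 →
      Integrable (fun x => (f x * p x) ^ 2 / (∑ j, α j * q j x)) ν := by
    intro α hα1 hα2
    refine (hint α hα1 hα2).integrable_of_forall_notMem_eq_zero ?_
    intro x hx
    rcases eq_or_ne (f x * p x) 0 with h0 | h0
    · simp [h0]
    · exact absurd (hsupp α hα1 hα2 x h0) hx
  constructor
  · -- convexity of the set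
    intro α hα β hβ a b ha hb hab
    constructor
    · intro j
      rcases ha.lt_or_eq with ha' | ha'
      · have := mul_nonneg hb (hβ.1 j).le
        have : 0 < a * α j := mul_pos ha' (hα.1 j)
        simp only [Pi.add_apply, Pi.smul_apply, smul_eq_mul]
        nlinarith [mul_nonneg hb (hβ.1 j).le]
      · have hb1 : b = 1 := by linarith
        simp only [Pi.add_apply, Pi.smul_apply, smul_eq_mul, ← ha', hb1]
        simpa using hβ.1 j
    · simp only [Pi.add_apply, Pi.smul_apply, smul_eq_mul]
      rw [Finset.sum_add_distrib, ← Finset.mul_sum, ← Finset.mul_sum, hα.2, hβ.2]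
      simpa using hab
  · intro α hα β hβ a b ha hb hab
    rcases ha.eq_or_lt with ha' | ha'
    · have hb1 : b = 1 := by linarith
      subst hb1
      simp [← ha']
    rcases hb.eq_or_lt with hb' | hb'
    · have ha1 : a = 1 := by linarith
      subst ha1
      simp [← hb']
    -- now 0 < a, 0 < b
    have hmix1 : ∀ j, 0 < (a • α + b • β) j := by
      intro j
      have := mul_pos ha' (hα.1 j)
      have := mul_pos hb' (hβ.1 j)
      simp only [Pi.add_apply, Pi.smul_apply, smul_eq_mul]
      linarith
    have hmix2 : (∑ j, (a • α + b • β) j) = 1 := by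
      simp only [Pi.add_apply, Pi.smul_apply, smul_eq_mul]
      rw [Finset.sum_add_distrib, ← Finset.mul_sum, ← Finset.mul_sum, hα.2, hβ.2]
      simpa using hab
    simp only
    rw [hrw _ hmix1 hmix2, hrw _ hα.1 hα.2, hrw _ hβ.1 hβ.2]
    have key : (∫ x, (f x * p x) ^ 2 / (∑ j, (a • α + b • β) j * q j x) ∂ν)
        ≤ a * (∫ x, (f x * p x) ^ 2 / (∑ j, α j * q j x) ∂ν)
          + b * (∫ x, (f x * p x) ^ 2 / (∑ j, β j * q j x) ∂ν) := by
      have h1 : (∫ x, (f x * p x) ^ 2 / (∑ j, (a • α + b • β) j * q j x) ∂ν)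
          ≤ ∫ x, (a * ((f x * p x) ^ 2 / (∑ j, α j * q j x))
              + b * ((f x * p x) ^ 2 / (∑ j, β j * q j x))) ∂ν := by
        apply integral_mono (hInt _ hmix1 hmix2)
          (((hInt α hα.1 hα.2).const_mul a).add ((hInt β hβ.1 hβ.2).const_mul b))
        intro x
        simp only [Pi.add_apply, Pi.smul_apply, smul_eq_mul]
        have hsum : (∑ j, (a * α j + b * β j) * q j x)
            = a * (∑ j, α j * q j x) + b * (∑ j, β j * q j x) := by
          rw [Finset.mul_sum, Finset.mul_sum, ← Finset.sum_add_distrib]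
          congr 1; ext j; ring
        rw [hsum]
        exact div_convex_aux ha' hb' hab
          (fun h0 => ⟨hsupp α hα.1 hα.2 x h0, hsupp β hβ.1 hβ.2 x h0⟩)
      rwa [integral_add ((hInt α hα.1 hα.2).const_mul a) ((hInt β hβ.1 hβ.2).const_mul b),
        integral_const_mul, integral_const_mul] at h1
    have hμ2 : a * μ ^ 2 + b * μ ^ 2 = μ ^ 2 := by nlinarith
    simp only [smul_eq_mul]
    nlinarith [key]
end

section
/- For each fixed x in the common support, the function (α, β) ↦ (f(x)p(x) − Σ_j β_j(q_j(x) − p(x)))² / (Σ_j α_j q_j(x)) is jointly convex in (α, β) on S⁰ × R^J; consequently σ²_{α,β} = ∫ of this integrand − μ² is jointly convex in (α,β). -/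
open MeasureTheory

private lemma comb_pos' {a b z1 z2 : ℝ} (ha : 0 ≤ a) (hb : 0 ≤ b) (hab : a + b = 1)
    (hz1 : 0 < z1) (hz2 : 0 < z2) : 0 < a * z1 + b * z2 := by
  rcases eq_or_lt_of_le ha with h | h
  · have hb1 : b = 1 := by linarith
    simp [← h, hb1, hz2]
  · nlinarith

private lemma key_ineq' {y1 y2 z1 z2 a b : ℝ} (hz1 : 0 < z1) (hz2 : 0 < z2)
    (ha : 0 ≤ a) (hb : 0 ≤ b) (hab : a + b = 1) :
    (a * y1 + b * y2) ^ 2 / (a * z1 + b * z2) ≤ a * (y1 ^ 2 / z1) + b * (y2 ^ 2 / z2) := by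
  have hz : 0 < a * z1 + b * z2 := comb_pos' ha hb hab hz1 hz2
  rw [div_le_iff₀ hz]
  have e1 : a * (y1 ^ 2 / z1) = a * y1 ^ 2 / z1 := by ring
  have e2 : b * (y2 ^ 2 / z2) = b * y2 ^ 2 / z2 := by ring
  rw [e1, e2, div_add_div _ _ (ne_of_gt hz1) (ne_of_gt hz2), div_mul_eq_mul_div,
    le_div_iff₀ (mul_pos hz1 hz2)]
  nlinarith [mul_nonneg (mul_nonneg ha hb) (sq_nonneg (y1 * z2 - y2 * z1))]

/-- For each fixed `x` in the common support, the map
`(α, β) ↦ (f x p x − ∑_j β_j (q_j x − p x))² / (∑_j α_j q_j x)` is jointly convex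
in `(α, β)` on `S⁰ × ℝ^J`; consequently `σ²_{α,β} = ∫ (integrand) − μ²` is jointly
convex in `(α, β)`. -/
theorem hat_variance_jointly_convex
    {E : Type*} [MeasurableSpace E] (ν : Measure E) (J : ℕ)
    (f p : E → ℝ) (q : Fin J → E → ℝ) (μ : ℝ)
    (hp0 : ∀ x, 0 ≤ p x) (hp1 : ∫ x, p x ∂ν = 1)
    (hq0 : ∀ j x, 0 ≤ q j x) (hq1 : ∀ j, ∫ x, q j x ∂ν = 1)
    (hμ : ∫ x, f x * p x ∂ν = μ)
    -- the common support `D`, on which `∑_j α_j q_j x > 0` for every `α ∈ S⁰`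
    (D : Set E) (hD : D = {x | 0 < ∑ j, q j x})
    (hint : ∀ (α β : Fin J → ℝ), (∀ j, 0 < α j) → (∑ j, α j) = 1 →
      IntegrableOn
        (fun x => (f x * p x - ∑ j, β j * (q j x - p x)) ^ 2 / (∑ j, α j * q j x))
        D ν) :
    (∀ x ∈ D,
      ConvexOn ℝ
        ({α : Fin J → ℝ | (∀ j, 0 < α j) ∧ (∑ j, α j) = 1} ×ˢ
          (Set.univ : Set (Fin J → ℝ)))
        (fun ab : (Fin J → ℝ) × (Fin J → ℝ) =>
          (f x * p x - ∑ j, ab.2 j * (q j x - p x)) ^ 2 / (∑ j, ab.1 j * q j x))) ∧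
    ConvexOn ℝ
      ({α : Fin J → ℝ | (∀ j, 0 < α j) ∧ (∑ j, α j) = 1} ×ˢ
        (Set.univ : Set (Fin J → ℝ)))
      (fun ab : (Fin J → ℝ) × (Fin J → ℝ) =>
        (∫ x in D,
          (f x * p x - ∑ j, ab.2 j * (q j x - p x)) ^ 2 / (∑ j, ab.1 j * q j x) ∂ν)
          - μ ^ 2) := by
  set S : Set (Fin J → ℝ) := {α : Fin J → ℝ | (∀ j, 0 < α j) ∧ (∑ j, α j) = 1} with hS
  set s : Set ((Fin J → ℝ) × (Fin J → ℝ)) := S ×ˢ (Set.univ : Set (Fin J → ℝ)) with hs_def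
  -- convexity of the underlying set
  have hSconv : Convex ℝ S := by
    intro α hα α' hα' a b ha hb hab
    refine ⟨fun j => ?_, ?_⟩
    · exact comb_pos' ha hb hab (hα.1 j) (hα'.1 j)
    · have : ∑ j, (a • α + b • α') j = a * ∑ j, α j + b * ∑ j, α' j := by
        simp [Finset.sum_add_distrib, Finset.mul_sum]
      rw [this, hα.2, hα'.2]; linarith
  have hsconv : Convex ℝ s := hSconv.prod convex_univ
  -- the integrand as a function of (α, β) and x
  set g : ((Fin J → ℝ) × (Fin J → ℝ)) → E → ℝ := fun ab x =>
    (f x * p x - ∑ j, ab.2 j * (q j x - p x)) ^ 2 / (∑ j, ab.1 j * q j x) with hg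
  -- key computations for convex combinations
  have hnum : ∀ (P Q : (Fin J → ℝ) × (Fin J → ℝ)) (a b : ℝ), a + b = 1 → ∀ x,
      f x * p x - ∑ j, (a • P + b • Q).2 j * (q j x - p x)
        = a * (f x * p x - ∑ j, P.2 j * (q j x - p x))
          + b * (f x * p x - ∑ j, Q.2 j * (q j x - p x)) := by
    intro P Q a b hab x
    have : ∑ j, (a • P + b • Q).2 j * (q j x - p x)
        = a * ∑ j, P.2 j * (q j x - p x) + b * ∑ j, Q.2 j * (q j x - p x) := by
      simp [Finset.sum_add_distrib, Finset.mul_sum, add_mul, mul_assoc]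
    rw [this]; linear_combination (f x * p x) * hab.symm
  have hden : ∀ (P Q : (Fin J → ℝ) × (Fin J → ℝ)) (a b : ℝ), ∀ x,
      ∑ j, (a • P + b • Q).1 j * q j x
        = a * (∑ j, P.1 j * q j x) + b * (∑ j, Q.1 j * q j x) := by
    intro P Q a b x
    simp [Finset.sum_add_distrib, Finset.mul_sum, add_mul, mul_assoc]
  -- positivity of the denominator on D
  have hdpos : ∀ α ∈ S, ∀ x ∈ D, 0 < ∑ j, α j * q j x := by
    intro α hα x hx
    rw [hD] at hx
    obtain ⟨j, -, hj⟩ : ∃ j ∈ Finset.univ, 0 < q j x := by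
      by_contra hcon
      push_neg at hcon
      have : ∑ j, q j x = 0 :=
        Finset.sum_eq_zero fun j _ => le_antisymm (hcon j (Finset.mem_univ j)) (hq0 j x)
      simp [this] at hx
    have h1 : α j * q j x ≤ ∑ j, α j * q j x :=
      Finset.single_le_sum (fun i _ => mul_nonneg (hα.1 i).le (hq0 i x)) (Finset.mem_univ j)
    exact lt_of_lt_of_le (mul_pos (hα.1 j) hj) h1
  -- vanishing off D
  have hzero : ∀ (α : Fin J → ℝ), ∀ x ∉ D, ∑ j, α j * q j x = 0 := by
    intro α x hx
    rw [hD] at hx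
    have hsum : ∑ j, q j x = 0 :=
      le_antisymm (not_lt.mp hx) (Finset.sum_nonneg fun j _ => hq0 j x)
    have hall : ∀ j ∈ Finset.univ, q j x = 0 :=
      (Finset.sum_eq_zero_iff_of_nonneg (fun j _ => hq0 j x)).mp hsum
    exact Finset.sum_eq_zero fun j hj => by rw [hall j hj, mul_zero]
  -- the pointwise convexity inequality (holds for ALL x)
  have hineq : ∀ P ∈ s, ∀ Q ∈ s, ∀ (a b : ℝ), 0 ≤ a → 0 ≤ b → a + b = 1 → ∀ x,
      g (a • P + b • Q) x ≤ a * g P x + b * g Q x := by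
    intro P hP Q hQ a b ha hb hab x
    by_cases hx : x ∈ D
    · have h1 := hdpos P.1 hP.1 x hx
      have h2 := hdpos Q.1 hQ.1 x hx
      simp only [hg]
      rw [hnum P Q a b hab x, hden P Q a b x]
      exact key_ineq' h1 h2 ha hb hab
    · simp only [hg]
      rw [hzero _ x hx, hzero _ x hx, hzero _ x hx]
      simp
  constructor
  · -- pointwise joint convexity on D
    intro x hx
    exact ⟨hsconv, fun P hP Q hQ a b ha hb hab => hineq P hP Q hQ a b ha hb hab x⟩
  · -- joint convexity of the variance
    refine ⟨hsconv, fun P hP Q hQ a b ha hb hab => ?_⟩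
    have hPmem : (a • P + b • Q) ∈ s := hsconv hP hQ ha hb hab
    have hiP : IntegrableOn (g P) D ν := hint P.1 P.2 hP.1.1 hP.1.2
    have hiQ : IntegrableOn (g Q) D ν := hint Q.1 Q.2 hQ.1.1 hQ.1.2
    have hiC : IntegrableOn (g (a • P + b • Q)) D ν :=
      hint (a • P + b • Q).1 (a • P + b • Q).2 hPmem.1.1 hPmem.1.2
    have hmono : ∫ x in D, g (a • P + b • Q) x ∂ν
        ≤ ∫ x in D, (a * g P x + b * g Q x) ∂ν := by
      refine integral_mono hiC ((hiP.const_mul a).add (hiQ.const_mul b)) ?_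
      intro x
      exact hineq P hP Q hQ a b ha hb hab x
    have hsplit : ∫ x in D, (a * g P x + b * g Q x) ∂ν
        = a * ∫ x in D, g P x ∂ν + b * ∫ x in D, g Q x ∂ν := by
      rw [integral_add (hiP.const_mul a) (hiQ.const_mul b),
        integral_const_mul, integral_const_mul]
    simp only [smul_eq_mul]
    have : ∫ x in D, g (a • P + b • Q) x ∂ν
        ≤ a * ∫ x in D, g P x ∂ν + b * ∫ x in D, g Q x ∂ν := by
      rw [← hsplit]; exact hmono
    have hgoal : a * ((∫ x in D, g P x ∂ν) - μ ^ 2) + b * ((∫ x in D, g Q x ∂ν) - μ ^ 2)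
        = a * ∫ x in D, g P x ∂ν + b * ∫ x in D, g Q x ∂ν - μ ^ 2 := by
      linear_combination (μ ^ 2) * hab.symm
    calc (∫ x in D, g (a • P + b • Q) x ∂ν) - μ ^ 2
        ≤ a * ∫ x in D, g P x ∂ν + b * ∫ x in D, g Q x ∂ν - μ ^ 2 := by linarith
      _ = _ := hgoal.symm
end

section
/- In the construction of the safety-bound proof, the convex combination δ = λα + (1−λ)ω with ω_j = ε for α_j ≥ ε, ω_j = Ω := (1−ε(J−K))/K for α_j < ε, and λ = (Ω−ε)/(Ω−min_j α_j), satisfies δ ∈ S^ε (i.e., δ_j ≥ ε for all j and Σ_j δ_j = 1), 0 < λ < 1, and 1/λ ≤ (1 − εJ + εK)/(1 − εJ). -/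
/-- In the safety-bound construction, `δ = λ α + (1−λ) ω` with `ω_j = ε` for
`α_j ≥ ε`, `ω_j = Ω := (1 − ε(J−K))/K` for `α_j < ε`, and
`λ = (Ω − ε)/(Ω − min_j α_j)`, satisfies `δ ∈ S^ε` (i.e. `δ_j ≥ ε` for all `j` and
`∑_j δ_j = 1`), `0 < λ < 1`, and `1/λ ≤ (1 − εJ + εK)/(1 − εJ)`. -/
theorem safety_construction
    (J : ℕ) (hJ : 0 < J) (ε : ℝ) (hε0 : 0 < ε) (hεJ : ε < 1 / (J : ℝ))
    (α : Fin J → ℝ) (hα0 : ∀ j, 0 ≤ α j) (hα1 : ∑ j, α j = 1)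
    (K : ℕ) (hK : K = (Finset.univ.filter fun j : Fin J => α j < ε).card)
    (hK1 : 1 ≤ K) (hKJ : K ≤ J - 1)
    (Ω : ℝ) (hΩ : Ω = (1 - ε * ((J : ℝ) - (K : ℝ))) / (K : ℝ))
    (ω : Fin J → ℝ) (hω : ∀ j, ω j = if α j < ε then Ω else ε)
    (m : ℝ)
    (hm : m = Finset.univ.inf'
      (Finset.univ_nonempty_iff.mpr (Fin.pos_iff_nonempty.mp hJ)) α)
    (lam : ℝ) (hlam : lam = (Ω - ε) / (Ω - m))
    (δ : Fin J → ℝ) (hδ : δ = fun j => lam * α j + (1 - lam) * ω j) :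
    (∀ j, ε ≤ δ j) ∧ (∑ j, δ j = 1) ∧ 0 < lam ∧ lam < 1 ∧
      1 / lam ≤ (1 - ε * (J : ℝ) + ε * (K : ℝ)) / (1 - ε * (J : ℝ)) := by
  have hJR : (0:ℝ) < J := by exact_mod_cast hJ
  rw [lt_div_iff₀ hJR] at hεJ
  have hKR : (0:ℝ) < K := by exact_mod_cast hK1
  have hKJn : K < J := lt_of_le_of_lt hKJ (Nat.sub_lt hJ Nat.one_pos)
  have h1εJ : 0 < 1 - ε * J := by linarith
  have hΩε : Ω - ε = (1 - ε * J) / K := by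
    rw [hΩ]; field_simp; ring
  have hΩεpos : 0 < Ω - ε := by rw [hΩε]; positivity
  have hne : (Finset.univ.filter fun j : Fin J => α j < ε).Nonempty := by
    apply Finset.card_pos.mp; omega
  obtain ⟨j0, hj0⟩ := hne
  have hj0' : α j0 < ε := (Finset.mem_filter.mp hj0).2
  have hmle : ∀ j, m ≤ α j := by
    intro j; rw [hm]; exact Finset.inf'_le _ (Finset.mem_univ j)
  have hmε : m < ε := lt_of_le_of_lt (hmle j0) hj0'
  have hm0 : 0 ≤ m := by
    obtain ⟨j, -, hj⟩ := Finset.exists_mem_eq_inf' (Finset.univ_nonempty_iff.mpr (Fin.pos_iff_nonempty.mp hJ)) α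
    rw [hm, hj]; exact hα0 j
  have hΩm : 0 < Ω - m := by linarith
  have hlam0 : 0 < lam := by rw [hlam]; positivity
  have hlam1 : lam < 1 := by rw [hlam, div_lt_one hΩm]; linarith
  have hkey : lam * (Ω - m) = Ω - ε := by
    rw [hlam]; field_simp
  have hsumω : ∑ j, ω j = 1 := by
    have h1 : ∑ j, ω j = ∑ j, (if α j < ε then Ω else ε) := by
      exact Finset.sum_congr rfl fun j _ => hω j
    rw [h1, Finset.sum_ite, Finset.sum_const, Finset.sum_const]
    have hc1 : (Finset.univ.filter fun j : Fin J => α j < ε).card = K := hK.symm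
    have hc2 : (Finset.univ.filter fun j : Fin J => ¬ α j < ε).card = J - K := by
      have := Finset.card_filter_add_card_filter_not
        (s := (Finset.univ : Finset (Fin J))) (p := fun j => α j < ε)
      simp only [Finset.card_univ, Fintype.card_fin] at this
      omega
    rw [hc1, hc2, nsmul_eq_mul, nsmul_eq_mul, Nat.cast_sub hKJn.le, hΩ]
    field_simp; ring
  refine ⟨?_, ?_, hlam0, hlam1, ?_⟩
  · intro j
    rw [hδ]
    simp only []
    rw [hω j]
    by_cases h : α j < ε
    · rw [if_pos h]
      nlinarith [hmle j, hlam0.le, hkey]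
    · rw [if_neg h]
      push_neg at h
      nlinarith [hlam0.le]
  · rw [hδ]
    simp only [Finset.sum_add_distrib, ← Finset.mul_sum, hα1, hsumω]
    ring
  · have h1 : 1 / lam = (Ω - m) / (Ω - ε) := by
      rw [hlam, one_div_div]
    rw [h1, div_le_div_iff₀ hΩεpos h1εJ]
    have hKΩ : K * (Ω - ε) = 1 - ε * J := by
      rw [hΩε]; field_simp
    nlinarith [hm0, hKΩ, hΩεpos, hKR]
end
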